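/- arXiv:2505.07588 — 3 statements merged into one kernel-verified Lean document; each statement's English description precedes it below -/
import Mathlib

section
/- For n ≥ 2, the cat number of the path on n vertices satisfies cat(P_n) = ⌈log₂ n⌉. -/
open SimpleGraph

universe u

/-- The cat can move from `u` to `w` in `G`: there is a nontrivial path,
equivalently `w ≠ u` and `w` is reachable from `u`. -/
def CatMove {V : Type u} (G : SimpleGraph V) (u w : V) : Prop :=
  u ≠ w ∧ G.Reachable u w

/-- `CapturedIn G v n` : with the cat on `v` and the herder to cut next,
the herder can guarantee that the cat is isolated after at most `n` edge deletions. -/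
inductive CapturedIn {V : Type u} : SimpleGraph V → V → ℕ → Prop
  | isolated {G : SimpleGraph V} {v : V} {n : ℕ} (h : ∀ w, ¬ G.Adj v w) :
      CapturedIn G v n
  | cut {G : SimpleGraph V} {v : V} {n : ℕ} (e : Sym2 V) (he : e ∈ G.edgeSet)
      (h : ∀ w, CatMove (G.deleteEdges {e}) v w → CapturedIn (G.deleteEdges {e}) w n) :
      CapturedIn G v (n + 1)

/-- The cat number of `G` with the cat starting at `v` (the game value; `⊤` if
the herder cannot guarantee capture within any fixed number of cuts). -/
noncomputable def catVNum {V : Type u} (G : SimpleGraph V) (v : V) : ℕ∞ :=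
  sInf (Nat.cast '' {m : ℕ | CapturedIn G v m})

/-- The cat number of `G`: the cat picks the best starting vertex. -/
noncomputable def catNum {V : Type u} (G : SimpleGraph V) : ℕ∞ :=
  ⨆ v, catVNum G v

/-- The cat, starting at `v`, can evade capture forever: there is a set of safe
positions (remaining graph, cat location), closed under responding to any cut. -/
def CatWinFrom {V : Type u} (G : SimpleGraph V) (v : V) : Prop :=
  ∃ S : Set (SimpleGraph V × V), (G, v) ∈ S ∧
    ∀ p ∈ S, (∃ w, p.1.Adj p.2 w) ∧
      ∀ e ∈ p.1.edgeSet, ∃ w, CatMove (p.1.deleteEdges {e}) p.2 w ∧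
        (p.1.deleteEdges {e}, w) ∈ S

/-- `G` is cat-win if the cat can evade capture forever from some starting vertex. -/
def CatWin {V : Type u} (G : SimpleGraph V) : Prop :=
  ∃ v, CatWinFrom G v

/-- `Evades G v n` : the cat on `v` has a strategy giving a valid response to each
of the next `n` cuts. -/
inductive Evades {V : Type u} : SimpleGraph V → V → ℕ → Prop
  | zero {G : SimpleGraph V} {v : V} : Evades G v 0
  | succ {G : SimpleGraph V} {v : V} {n : ℕ} (move : Sym2 V → V)
      (hmove : ∀ e ∈ G.edgeSet, CatMove (G.deleteEdges {e}) v (move e))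
      (h : ∀ e ∈ G.edgeSet, Evades (G.deleteEdges {e}) (move e) n) :
      Evades G v (n + 1)

/-- `G` is `k`-evadible for every `k`: for each `n` the cat can respond to the
first `n` cuts from a suitable starting vertex. -/
def OmegaEvadible {V : Type u} (G : SimpleGraph V) : Prop :=
  ∀ n : ℕ, ∃ v, Evades G v n

/-- The infinite complete binary tree on binary strings. -/
def binTree : SimpleGraph (List Bool) :=
  SimpleGraph.fromRel (fun a b => ∃ t : Bool, b = a ++ [t])

/-- `H` is a minor of `G` : disjoint connected branch sets, one per vertex of `H`,
with an edge of `G` between branch sets for every edge of `H`. -/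
def IsMinor {W : Type*} {V : Type u} (H : SimpleGraph W) (G : SimpleGraph V) : Prop :=
  ∃ B : W → Set V,
    (∀ w, (G.induce (B w)).Connected) ∧
    (Pairwise fun w₁ w₂ => Disjoint (B w₁) (B w₂)) ∧
    (∀ w₁ w₂, H.Adj w₁ w₂ → ∃ x ∈ B w₁, ∃ y ∈ B w₂, G.Adj x y)

/-- Every pair of distinct vertices is joined by two edge-disjoint (finite) paths. -/
def TwoEdgeConnected {V : Type u} (G : SimpleGraph V) : Prop :=
  ∀ u v : V, u ≠ v → ∃ (p q : G.Walk u v), p.IsPath ∧ q.IsPath ∧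
    ∀ e ∈ p.edges, e ∉ q.edges

/-- `x` has degree exactly 1 in `G`. -/
def DegOne {V : Type u} (G : SimpleGraph V) (x : V) : Prop :=
  ∃ a, G.neighborSet x = {a}

/-- `x` has degree exactly 2 in `G`. -/
def DegTwo {V : Type u} (G : SimpleGraph V) (x : V) : Prop :=
  ∃ a b, a ≠ b ∧ G.neighborSet x = {a, b}

/-- `x` has degree exactly 3 in `G`. -/
def DegThree {V : Type u} (G : SimpleGraph V) (x : V) : Prop :=
  ∃ a b c, a ≠ b ∧ a ≠ c ∧ b ≠ c ∧ G.neighborSet x = {a, b, c}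

/-- `x` has degree at least `k` in `G`. -/
def DegGe {V : Type u} (G : SimpleGraph V) (x : V) (k : ℕ) : Prop :=
  ∃ s : Finset V, s.card = k ∧ ∀ a ∈ s, G.Adj x a

/-!
While the cat's component is an interval `[a, b]` of the path, cutting its middle edge leaves the
cat an interval of at most half the length, so `k` cuts isolate the cat once `b - a < 2 ^ k`.
Conversely, a cat at distance at least `2 ^ (m - 1)` from both ends of its interval survives `m`
cuts: after any cut the cat's new interval keeps one of the old ends, so it still has length at
least `2 ^ (m - 1)`, and the cat moves to (a vertex next to) its midpoint. For `n` vertices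
the first bound gives `⌈log₂ n⌉` cuts, and the second, with `m = ⌈log₂ n⌉ - 1`, that fewer do not
suffice.
-/

lemma CapturedIn.mono {V : Type*} {G : SimpleGraph V} {v : V} {m m' : ℕ}
    (h : CapturedIn G v m) (hm : m ≤ m') : CapturedIn G v m' := by
  induction h generalizing m' with
  | isolated h => exact .isolated h
  | cut e he _ ih =>
    obtain ⟨m', rfl⟩ := Nat.exists_eq_add_of_lt hm
    exact .cut e he fun w hw => ih w hw (by omega)

lemma catVNum_le_of_capturedIn {V : Type*} {G : SimpleGraph V} {v : V} {m : ℕ}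
    (h : CapturedIn G v m) : catVNum G v ≤ m :=
  sInf_le ⟨m, h, rfl⟩

lemma succ_le_catVNum_of_not_capturedIn {V : Type*} {G : SimpleGraph V} {v : V} {m : ℕ}
    (h : ¬ CapturedIn G v m) : ((m + 1 : ℕ) : ℕ∞) ≤ catVNum G v := by
  refine le_sInf ?_
  rintro _ ⟨m', hm', rfl⟩
  exact_mod_cast Nat.succ_le_of_lt (lt_of_not_ge fun hle => h (hm'.mono hle))

lemma deleteEdges_adj_of_val_succ {n : ℕ} {G : SimpleGraph (Fin n)} {x y i j : Fin n}
    (hxy : x.val + 1 = y.val) (hij : i.val + 1 = j.val) :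
    (G.deleteEdges {s(x, y)}).Adj i j ↔ G.Adj i j ∧ i.val ≠ x.val := by
  rw [deleteEdges_adj, Set.mem_singleton_iff, Sym2.eq_iff, Fin.ext_iff, Fin.ext_iff,
    Fin.ext_iff, Fin.ext_iff]
  exact and_congr_right fun _ => by omega

/-- `G` is a subgraph of the path `0 - 1 - ⋯ - (n - 1)` in which `[a, b]` is a connected
component. -/
structure IsIntervalComponent {n : ℕ} (G : SimpleGraph (Fin n)) (a b : ℕ) : Prop where
  le : a ≤ b
  lt : b < n
  le_pathGraph : G ≤ pathGraph n
  adj_succ : ∀ i j : Fin n, a ≤ i.val → i.val + 1 = j.val → j.val ≤ b → G.Adj i j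
  not_adj_left : ∀ i j : Fin n, i.val + 1 = a → j.val = a → ¬ G.Adj i j
  not_adj_right : ∀ i j : Fin n, i.val = b → j.val = b + 1 → ¬ G.Adj i j

lemma isIntervalComponent_pathGraph {n : ℕ} (hn : 0 < n) :
    IsIntervalComponent (pathGraph n) 0 (n - 1) where
  le := Nat.zero_le _
  lt := by omega
  le_pathGraph := le_rfl
  adj_succ _ _ _ hij _ := pathGraph_adj.mpr (.inl hij)
  not_adj_left _ _ h _ := by omega
  not_adj_right _ j _ h := by omega

namespace IsIntervalComponent

variable {n : ℕ} {G : SimpleGraph (Fin n)} {a b : ℕ}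

lemma val_succ_eq_or (hG : IsIntervalComponent G a b) {x y : Fin n} (h : G.Adj x y) :
    x.val + 1 = y.val ∨ y.val + 1 = x.val :=
  pathGraph_adj.mp (hG.le_pathGraph h)

lemma forall_not_adj (hG : IsIntervalComponent G a a) {v : Fin n} (hv : v.val = a) :
    ∀ w, ¬ G.Adj v w := fun w h => by
  rcases hG.val_succ_eq_or h with h' | h'
  · exact hG.not_adj_right v w hv (by omega) h
  · exact hG.not_adj_left w v (by omega) hv h.symm

lemma exists_adj (hG : IsIntervalComponent G a b) (hab : a < b) {v : Fin n} (hv : a ≤ v.val)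
    (hv' : v.val ≤ b) : ∃ w, G.Adj v w := by
  have := hG.lt
  by_cases h : v.val < b
  · obtain ⟨w, hw⟩ : ∃ w : Fin n, w.val = v.val + 1 := ⟨⟨_, by omega⟩, rfl⟩
    exact ⟨w, hG.adj_succ v w hv hw.symm (by omega)⟩
  · obtain ⟨w, hw⟩ : ∃ w : Fin n, w.val = v.val - 1 := ⟨⟨_, by omega⟩, rfl⟩
    exact ⟨w, (hG.adj_succ w v (by omega) (by omega) hv').symm⟩

lemma mem_of_adj (hG : IsIntervalComponent G a b) {u w : Fin n} (hu : a ≤ u.val)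
    (hu' : u.val ≤ b) (h : G.Adj u w) : a ≤ w.val ∧ w.val ≤ b := by
  rcases hG.val_succ_eq_or h with h' | h'
  · have : u.val ≠ b := fun hb => hG.not_adj_right u w hb (by omega) h
    omega
  · have : u.val ≠ a := fun ha => hG.not_adj_left w u (by omega) ha h.symm
    omega

lemma mem_of_reachable (hG : IsIntervalComponent G a b) {v w : Fin n} (hv : a ≤ v.val)
    (hv' : v.val ≤ b) (h : G.Reachable v w) : a ≤ w.val ∧ w.val ≤ b := by
  obtain ⟨p⟩ := h
  induction p with
  | nil => exact ⟨hv, hv'⟩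
  | cons h _ ih =>
    obtain ⟨h1, h2⟩ := hG.mem_of_adj hv hv' h
    exact ih h1 h2

lemma reachable_of_le (hG : IsIntervalComponent G a b) {i j : Fin n} (hi : a ≤ i.val)
    (hij : i.val ≤ j.val) (hj : j.val ≤ b) : G.Reachable i j := by
  obtain ⟨k, hk⟩ := Nat.exists_eq_add_of_le hij
  induction k generalizing j with
  | zero => rw [Fin.ext hk]
  | succ k ih =>
    obtain ⟨j', hj'⟩ : ∃ j' : Fin n, j'.val = i.val + k := ⟨⟨_, by omega⟩, rfl⟩
    exact (ih (by omega) (by omega) hj').trans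
      (hG.adj_succ j' j (by omega) (by omega) hj).reachable

lemma reachable_of_mem (hG : IsIntervalComponent G a b) {v w : Fin n} (hv : a ≤ v.val)
    (hv' : v.val ≤ b) (hw : a ≤ w.val) (hw' : w.val ≤ b) : G.Reachable v w := by
  rcases le_total v.val w.val with h | h
  · exact hG.reachable_of_le hv h hw'
  · exact (hG.reachable_of_le hw h hv').symm

lemma deleteEdges_left (hG : IsIntervalComponent G a b) {x y : Fin n}
    (hxy : x.val + 1 = y.val) (hax : a ≤ x.val) (hxb : x.val < b) :
    IsIntervalComponent (G.deleteEdges {s(x, y)}) a x.val where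
  le := hax
  lt := x.isLt
  le_pathGraph := (deleteEdges_le _).trans hG.le_pathGraph
  adj_succ i j hi hij hj :=
    (deleteEdges_adj_of_val_succ hxy hij).2 ⟨hG.adj_succ i j hi hij (by omega), by omega⟩
  not_adj_left i j h1 h2 h := hG.not_adj_left i j h1 h2 (deleteEdges_le _ h)
  not_adj_right i j h1 h2 h := ((deleteEdges_adj_of_val_succ hxy (by omega)).1 h).2 h1

lemma deleteEdges_right (hG : IsIntervalComponent G a b) {x y : Fin n}
    (hxy : x.val + 1 = y.val) (hax : a ≤ x.val) (hxb : x.val < b) :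
    IsIntervalComponent (G.deleteEdges {s(x, y)}) (x.val + 1) b where
  le := hxb
  lt := hG.lt
  le_pathGraph := (deleteEdges_le _).trans hG.le_pathGraph
  adj_succ i j hi hij hj :=
    (deleteEdges_adj_of_val_succ hxy hij).2 ⟨hG.adj_succ i j (by omega) hij hj, by omega⟩
  not_adj_left i j h1 h2 h := ((deleteEdges_adj_of_val_succ hxy (by omega)).1 h).2 (by omega)
  not_adj_right i j h1 h2 h := hG.not_adj_right i j h1 h2 (deleteEdges_le _ h)

lemma deleteEdges_of_outside (hG : IsIntervalComponent G a b) {x y : Fin n}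
    (hxy : x.val + 1 = y.val) (hx : x.val < a ∨ b ≤ x.val) :
    IsIntervalComponent (G.deleteEdges {s(x, y)}) a b where
  le := hG.le
  lt := hG.lt
  le_pathGraph := (deleteEdges_le _).trans hG.le_pathGraph
  adj_succ i j hi hij hj :=
    (deleteEdges_adj_of_val_succ hxy hij).2 ⟨hG.adj_succ i j hi hij hj, by omega⟩
  not_adj_left i j h1 h2 h := hG.not_adj_left i j h1 h2 (deleteEdges_le _ h)
  not_adj_right i j h1 h2 h := hG.not_adj_right i j h1 h2 (deleteEdges_le _ h)

lemma exists_deleteEdges (hG : IsIntervalComponent G a b) {v : Fin n} (hv : a ≤ v.val)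
    (hv' : v.val ≤ b) {e : Sym2 (Fin n)} (he : e ∈ G.edgeSet) :
    ∃ a' b', IsIntervalComponent (G.deleteEdges {e}) a' b' ∧ a' ≤ v.val ∧ v.val ≤ b' ∧
      (a' = a ∨ b' = b) := by
  obtain ⟨x, y, rfl, hxy⟩ : ∃ x y, e = s(x, y) ∧ x.val + 1 = y.val := by
    induction e using Sym2.ind with
    | _ x y =>
      rcases hG.val_succ_eq_or he with h | h
      · exact ⟨x, y, rfl, h⟩
      · exact ⟨y, x, Sym2.eq_swap, h⟩
  by_cases hx : a ≤ x.val ∧ x.val < b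
  · by_cases hvx : v.val ≤ x.val
    · exact ⟨a, x.val, hG.deleteEdges_left hxy hx.1 hx.2, hv, hvx, .inl rfl⟩
    · exact ⟨x.val + 1, b, hG.deleteEdges_right hxy hx.1 hx.2, by omega, hv', .inr rfl⟩
  · exact ⟨a, b, hG.deleteEdges_of_outside hxy (by omega), hv, hv', .inl rfl⟩

lemma exists_catMove_centered (hG : IsIntervalComponent G a b) {v : Fin n} (hv : a ≤ v.val)
    (hv' : v.val ≤ b) {N : ℕ} (hN : 0 < N) (h : N ≤ v.val - a ∨ N ≤ b - v.val) :
    ∃ w : Fin n, CatMove G v w ∧ a ≤ w.val ∧ w.val ≤ b ∧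
      N ≤ 2 * (w.val - a) + 1 ∧ N ≤ 2 * (b - w.val) + 1 := by
  obtain ⟨j, hjv, hja, hjb, hj⟩ : ∃ j, j ≠ v.val ∧ a ≤ j ∧ j ≤ b ∧
      N ≤ 2 * (j - a) + 1 ∧ N ≤ 2 * (b - j) + 1 := by
    by_cases hmid : v.val = (a + b) / 2
    · exact ⟨(a + b) / 2 + 1, by omega⟩
    · exact ⟨(a + b) / 2, by omega⟩
  have := hG.lt
  refine ⟨⟨j, by omega⟩, ⟨fun hvj => hjv (congrArg Fin.val hvj).symm, ?_⟩, hja, hjb, hj⟩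
  exact hG.reachable_of_mem hv hv' hja hjb

theorem capturedIn_of_sub_lt_two_pow (hG : IsIntervalComponent G a b) {v : Fin n}
    (hv : a ≤ v.val) (hv' : v.val ≤ b) {k : ℕ} (hk : b - a < 2 ^ k) : CapturedIn G v k := by
  induction k generalizing G a b v with
  | zero =>
    obtain rfl : a = b := by rw [pow_zero] at hk; omega
    exact .isolated (hG.forall_not_adj (by omega))
  | succ k ih =>
    rcases hG.le.eq_or_lt with rfl | hab
    · exact .isolated (hG.forall_not_adj (by omega))
    have := hG.lt
    obtain ⟨x, hx⟩ : ∃ x : Fin n, x.val = (a + b) / 2 := ⟨⟨_, by omega⟩, rfl⟩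
    obtain ⟨y, hy⟩ : ∃ y : Fin n, y.val = (a + b) / 2 + 1 := ⟨⟨_, by omega⟩, rfl⟩
    have hxy : x.val + 1 = y.val := by omega
    refine .cut s(x, y) (hG.adj_succ x y (by omega) hxy (by omega)) fun w ⟨_, hvw⟩ => ?_
    rw [pow_succ] at hk
    by_cases hvx : v.val ≤ x.val
    · have hL := hG.deleteEdges_left hxy (by omega) (by omega)
      obtain ⟨hw, hw'⟩ := hL.mem_of_reachable hv hvx hvw
      exact ih hL hw hw' (by omega)
    · have hR := hG.deleteEdges_right hxy (by omega) (by omega)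
      obtain ⟨hw, hw'⟩ := hR.mem_of_reachable (by omega) hv' hvw
      exact ih hR hw hw' (by omega)

theorem not_capturedIn_of_centered (hG : IsIntervalComponent G a b) (hab : a < b) {v : Fin n}
    (hv : a ≤ v.val) (hv' : v.val ≤ b) {m : ℕ} (hva : 2 ^ m ≤ 2 * (v.val - a) + 1)
    (hvb : 2 ^ m ≤ 2 * (b - v.val) + 1) : ¬ CapturedIn G v m := by
  induction m generalizing G a b v with
  | zero =>
    rintro ⟨hiso⟩
    obtain ⟨w, hw⟩ := hG.exists_adj hab hv hv'
    exact hiso w hw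
  | succ m ih =>
    rintro (⟨hiso⟩ | ⟨e, he, hcut⟩)
    · obtain ⟨w, hw⟩ := hG.exists_adj hab hv hv'
      exact hiso w hw
    rw [pow_succ] at hva hvb
    obtain ⟨a', b', hG', hva', hvb', hend⟩ := hG.exists_deleteEdges hv hv' he
    obtain ⟨w, hmove, hwa, hwb, hwa', hwb'⟩ :=
      hG'.exists_catMove_centered hva' hvb' (N := 2 ^ m) (Nat.two_pow_pos m) (by omega)
    have := Fin.val_ne_of_ne hmove.1
    exact ih hG' (by omega) hwa hwb hwa' hwb' (hcut w hmove)

theorem exists_not_capturedIn (hG : IsIntervalComponent G a b) {m : ℕ} (hm : 2 ^ m ≤ b - a) :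
    ∃ v : Fin n, ¬ CapturedIn G v m := by
  have := Nat.two_pow_pos m
  obtain ⟨v, hv⟩ : ∃ v : Fin n, v.val = a + (b - a) / 2 := ⟨⟨_, by have := hG.lt; omega⟩, rfl⟩
  exact ⟨v, hG.not_capturedIn_of_centered (by omega) (by omega) (by omega) (by omega)
    (by omega)⟩

end IsIntervalComponent

theorem catNum_pathGraph_general (n : ℕ) :
    catNum (SimpleGraph.pathGraph n) = (Nat.clog 2 n : ℕ∞) := by
  refine le_antisymm (iSup_le fun v => catVNum_le_of_capturedIn ?_) ?_
  · have hn := v.pos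
    have hk := Nat.le_pow_clog one_lt_two n
    exact (isIntervalComponent_pathGraph hn).capturedIn_of_sub_lt_two_pow
      (Nat.zero_le _) (by omega) (by omega)
  · rcases hk : Nat.clog 2 n with _ | m
    · simp
    have hm : 2 ^ m < n := Nat.pow_lt_of_lt_clog (by omega)
    have hn : 0 < n := (Nat.zero_le _).trans_lt hm
    obtain ⟨v, hv⟩ :=
      (isIntervalComponent_pathGraph hn).exists_not_capturedIn (m := m) (by omega)
    exact (succ_le_catVNum_of_not_capturedIn hv).trans (le_iSup _ v)

/-- For `n ≥ 2`, `cat(P_n) = ⌈log₂ n⌉`. -/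
theorem catNum_pathGraph (n : ℕ) (hn : 2 ≤ n) :
    catNum (SimpleGraph.pathGraph n) = (Nat.clog 2 n : ℕ∞) :=
  catNum_pathGraph_general n
end

section
/- Let G be a connected graph with at least one edge. For every vertex v of G, deg(v) = 1 if and only if cat(G, v) = 1. -/
open SimpleGraph

universe u

/-!
Both sides say that `v` has a neighbour but no two. The herder captures a cat sitting on `v`
with no cut at all exactly when `v` is isolated, and with one cut exactly when some edge `e`
isolates `v` in `G - e`: if `v` kept a neighbour `c` in `G - e`, the cat could run to `c`
and would not be isolated there. Some single edge isolates `v` iff `v` has at most one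
neighbour.
-/

section

variable {V : Type u} {G : SimpleGraph V} {v : V}

theorem not_catMove_of_forall_not_adj (h : ∀ w, ¬ G.Adj v w) (w : V) : ¬ CatMove G v w := by
  rintro ⟨hne, ⟨p⟩⟩
  cases p with
  | nil => exact hne rfl
  | cons hadj _ => exact h _ hadj

theorem capturedIn_zero_iff : CapturedIn G v 0 ↔ ∀ w, ¬ G.Adj v w := by
  refine ⟨fun h => ?_, CapturedIn.isolated⟩
  cases h with
  | isolated h => exact h

theorem capturedIn_one_iff : CapturedIn G v 1 ↔ (G.neighborSet v).Subsingleton := by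
  constructor
  · intro h
    cases h with
    | isolated hiso => exact fun a ha => absurd ha (hiso a)
    | cut e _ hcut =>
      have hiso : ∀ c, ¬ (G.deleteEdges {e}).Adj v c := fun c hc =>
        capturedIn_zero_iff.1 (hcut c ⟨hc.ne, hc.reachable⟩) v hc.symm
      have hedge : ∀ w, G.Adj v w → s(v, w) = e := fun w hw => by
        simpa [deleteEdges_adj, hw] using hiso w
      intro w₁ hw₁ w₂ hw₂
      exact Sym2.congr_right.1 ((hedge w₁ hw₁).trans (hedge w₂ hw₂).symm)
  · intro hsub
    rcases (G.neighborSet v).eq_empty_or_nonempty with hempty | ⟨a, ha⟩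
    · exact .isolated fun w hw => Set.eq_empty_iff_forall_notMem.1 hempty w hw
    · refine .cut s(v, a) ha fun w hw => absurd hw (not_catMove_of_forall_not_adj ?_ w)
      intro c hc
      rw [deleteEdges_adj, hsub hc.1 ha] at hc
      exact hc.2 rfl

theorem catVNum_eq_coe_iff {n : ℕ} :
    catVNum G v = n ↔ CapturedIn G v n ∧ ∀ m < n, ¬ CapturedIn G v m := by
  have hcat : catVNum G v = ⨅ m ∈ {m | CapturedIn G v m}, (m : ℕ∞) := sInf_image
  constructor
  · intro h
    have hne : {m | CapturedIn G v m}.Nonempty := by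
      by_contra hemp
      rw [Set.not_nonempty_iff_eq_empty] at hemp
      simp [hcat, hemp] at h
    rw [hcat, ← ENat.natCast_sInf hne, Nat.cast_inj] at h
    subst h
    exact ⟨Nat.sInf_mem hne, fun m hm hcap => (Nat.sInf_le hcap).not_gt hm⟩
  · rintro ⟨hn, hmin⟩
    refine le_antisymm (sInf_le ⟨n, hn, rfl⟩) (le_sInf ?_)
    rintro _ ⟨m, hm, rfl⟩
    exact Nat.cast_le.2 (not_lt.1 fun hlt => hmin m hlt hm)

theorem catVNum_eq_one_iff : catVNum G v = 1 ↔ CapturedIn G v 1 ∧ ¬ CapturedIn G v 0 := by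
  simpa [Nat.lt_one_iff] using catVNum_eq_coe_iff (G := G) (v := v) (n := 1)

end

theorem degOne_iff_catVNum_eq_one_general {V : Type u} (G : SimpleGraph V)
    (v : V) :
    DegOne G v ↔ catVNum G v = 1 := by
  rw [catVNum_eq_one_iff, capturedIn_one_iff, capturedIn_zero_iff, DegOne,
    Set.exists_eq_singleton_iff_nonempty_subsingleton]
  exact and_comm.trans (and_congr_right' not_forall_not.symm)

/-- In a connected graph with at least one edge, a vertex has
degree 1 iff its cat number is 1. -/
theorem degOne_iff_catVNum_eq_one {V : Type u} (G : SimpleGraph V)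
    (hc : G.Connected) (he : G.edgeSet.Nonempty) (v : V) :
    DegOne G v ↔ catVNum G v = 1 :=
  degOne_iff_catVNum_eq_one_general G v
end

section
/- Let G be a connected graph with vertices u, v where deg(u) ≥ 2, uv is an edge, and deg(v) = 1. Let G_v be obtained from G by adding a new vertex x and the edge ux. Then cat(G, a) = cat(G_v, a) for all vertices a of G, and cat(G_v, x) = 1; in particular cat(G_v) = cat(G). -/
open SimpleGraph

universe u

/-- `G` with a new vertex (`none`) joined to `u` by an edge. -/
def addLeaf {V : Type u} (G : SimpleGraph V) (u : V) : SimpleGraph (Option V) :=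
  SimpleGraph.fromRel (fun a b =>
    (∃ x y, a = some x ∧ b = some y ∧ G.Adj x y) ∨ (a = some u ∧ b = none))

/-!
Removing the new leaf `x` embeds `G` into `G_v`, and a herder strategy on `G_v` restricts to `G`;
hence `cat(G, a) ≤ cat(G_v, a)`.

Conversely, a herder strategy on `G` is played on `G_v` by induction on its length, keeping the
pendant edge `uv` in place. When the cat steps onto one of the leaves `x`, `v`, a single cut
isolates it, and that cut is in the budget: a cat that can still reach `u` is not yet caught in
`G`. If the strategy wants to cut `uv` while the cat can still reach `u`, the herder cuts another
edge `uw₀` at `u` instead: `G - uw₀` is `G - uv` with the edge `uw₀` moved onto the pendant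
vertex `v`, and such a move never helps the cat. From `x` itself the herder cuts `ux` at once, so
`cat(G_v, x) = 1 ≤ cat(G, u)`.
-/

namespace SimpleGraph

variable {V W : Type*}

theorem Reachable.map_of_forall_adj {H : SimpleGraph V} {H' : SimpleGraph W} (f : V → W)
    (hf : ∀ a b, H.Adj a b → H'.Reachable (f a) (f b)) {a b : V} (h : H.Reachable a b) :
    H'.Reachable (f a) (f b) := by
  obtain ⟨w⟩ := h
  induction w with
  | nil => rfl
  | cons hadj _ ih => exact (hf _ _ hadj).trans ih

theorem IsIsolated.eq_of_reachable {H : SimpleGraph V} {a b : V} (ha : H.IsIsolated a)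
    (h : H.Reachable a b) : b = a := by
  obtain ⟨_ | ⟨hadj, _⟩⟩ := h
  · rfl
  · exact absurd hadj (ha _)

theorem DegOne.eq_of_adj {G : SimpleGraph V} {v y z : V} (h : DegOne G v) (hy : G.Adj v y)
    (hz : G.Adj v z) : y = z := by
  obtain ⟨a, ha⟩ := h
  have hy' : y ∈ G.neighborSet v := hy
  have hz' : z ∈ G.neighborSet v := hz
  rw [ha] at hy' hz'
  exact hy'.trans hz'.symm

theorem DegGe.exists_adj_ne {G : SimpleGraph V} {x : V} {k : ℕ} (h : DegGe G x k) (hk : 1 < k)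
    (v : V) : ∃ w, w ≠ v ∧ G.Adj x w := by
  obtain ⟨s, rfl, hs⟩ := h
  obtain ⟨w, hws, hwv⟩ := s.exists_mem_ne hk v
  exact ⟨w, hwv, hs w hws⟩

section pendant

variable {M : SimpleGraph V} {u v : V}

theorem Reachable.deleteEdges_pendant (hv : ∀ y, M.Adj v y → y = u) {a b : V} (ha : a ≠ v)
    (hb : b ≠ v) (h : M.Reachable a b) : (M.deleteEdges {s(u, v)}).Reachable a b := by
  classical
  have key := h.map_of_forall_adj (H' := M.deleteEdges {s(u, v)})
    (fun z => if z = v then u else z) fun x y hxy => by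
      rcases eq_or_ne x v with rfl | hx
      · obtain rfl := hv y hxy
        simp
      rcases eq_or_ne y v with rfl | hy
      · obtain rfl := hv x hxy.symm
        simp
      refine Adj.reachable ?_
      simp [hx, hy, hxy]
  simpa [ha, hb] using key

theorem Reachable.deleteEdges_swap [DecidableEq V] (hv : ∀ y, M.Adj v y → y = u) {w₀ : V}
    (huw : M.Adj u w₀) (hw₀ : w₀ ≠ v) {a b : V}
    (h : (M.deleteEdges {s(u, w₀)}).Reachable a b) :
    (M.deleteEdges {s(u, v)}).Reachable (if a = v then w₀ else a) (if b = v then w₀ else b) := by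
  have huv : u ≠ v := fun h => hw₀ ((hv w₀ (h ▸ huw)).trans h)
  refine h.map_of_forall_adj (fun z => if z = v then w₀ else z) fun x y hxy => Adj.reachable ?_
  rw [deleteEdges_adj] at hxy
  rcases eq_or_ne x v with rfl | hx
  · obtain rfl := hv y hxy.1
    simp [huv, huw.symm, hw₀]
  rcases eq_or_ne y v with rfl | hy
  · obtain rfl := hv x hxy.1.symm
    simp [huv, huw, hw₀]
  simp [hx, hy, hxy.1]

theorem IsIsolated.deleteEdges_swap {w₀ q : V} (huw : M.Adj u w₀) (hw₀ : w₀ ≠ v) (hq : q ≠ v)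
    (h : (M.deleteEdges {s(u, v)}).IsIsolated q) : (M.deleteEdges {s(u, w₀)}).IsIsolated q := by
  intro y hy
  rw [deleteEdges_adj] at hy
  refine h y ((deleteEdges_adj ..).2 ⟨hy.1, fun hqy => ?_⟩)
  obtain ⟨rfl, rfl⟩ : q = u ∧ y = v := by simpa [hq] using hqy
  exact h w₀ (by simp [huw, hw₀, hq])

end pendant

section addLeaf

variable {G : SimpleGraph V} {u : V}

@[simp] theorem addLeaf_adj_some_some {x y : V} :
    (addLeaf G u).Adj (some x) (some y) ↔ G.Adj x y := by
  simp [addLeaf, fromRel_adj, G.adj_comm y]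
  exact fun h => h.ne

@[simp] theorem addLeaf_adj_some_none {x : V} : (addLeaf G u).Adj (some x) none ↔ x = u := by
  simp [addLeaf, fromRel_adj]

@[simp] theorem addLeaf_adj_none_some {x : V} : (addLeaf G u).Adj none (some x) ↔ x = u := by
  simp [addLeaf, fromRel_adj, eq_comm]

theorem addLeaf_deleteEdges (e : Sym2 V) :
    (addLeaf G u).deleteEdges {Sym2.map some e} = addLeaf (G.deleteEdges {e}) u := by
  ext (_ | a) (_ | b) <;> induction e using Sym2.ind <;> simp

theorem map_some_mem_edgeSet_addLeaf {e : Sym2 V} :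
    Sym2.map some e ∈ (addLeaf G u).edgeSet ↔ e ∈ G.edgeSet := by
  induction e using Sym2.ind
  simp

theorem isIsolated_addLeaf_some {p : V} (h : G.IsIsolated p) (hpu : p ≠ u) :
    (addLeaf G u).IsIsolated (some p) := by
  rintro (_ | w) hw <;> simp_all [IsIsolated]

theorem addLeaf_reachable_some {p : V} {z : Option V} (h : (addLeaf G u).Reachable (some p) z) :
    G.Reachable p (z.getD u) :=
  h.map_of_forall_adj (Option.getD · u) <| by
    rintro (_ | a) (_ | b) hab <;> simp_all [Adj.reachable]

end addLeaf

end SimpleGraph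

namespace CatMove

variable {V : Type*} {M : SimpleGraph V} {u v p : V}

theorem of_addLeaf {w : V} (h : CatMove (addLeaf M u) (some p) (some w)) : CatMove M p w :=
  ⟨fun hpw => h.1 (congrArg some hpw), by simpa using addLeaf_reachable_some h.2⟩

theorem exists_adj_ne (huv : M.Adj u v) (hv : ∀ y, M.Adj v y → y = u) (hpv : p ≠ v)
    (h : CatMove M p u) : ∃ w, w ≠ v ∧ M.Adj u w := by
  obtain ⟨_ | ⟨hadj, _⟩⟩ := (h.2.deleteEdges_pendant hv hpv huv.ne).symm
  · exact absurd rfl h.1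
  · rw [deleteEdges_adj] at hadj
    exact ⟨_, fun h => hadj.2 (h ▸ rfl), hadj.1⟩

end CatMove

namespace CapturedIn

variable {V W : Type*} {H M : SimpleGraph V} {u v : V} {n m : ℕ}

theorem pos {p w : V} (h : CapturedIn H p n) (hadj : H.Adj p w) : 0 < n := by
  cases h with
  | isolated hiso => exact absurd hadj (hiso w)
  | cut => omega

theorem pos_of_forall_catMove {p z : V} (h : ∀ w, CatMove H p w → CapturedIn H w m)
    (hr : H.Reachable p u) (huz : H.Adj u z) : 0 < m := by
  rcases eq_or_ne p u with rfl | hpu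
  · exact (h z ⟨huz.ne, huz.reachable⟩).pos huz.symm
  · exact (h u ⟨hpu, hr⟩).pos huz

theorem of_forall_adj_eq {y z : V} (hn : 0 < n) (hy : ∀ w, H.Adj y w → w = z) :
    CapturedIn H y n := by
  obtain ⟨n, rfl⟩ := Nat.exists_eq_add_one.2 hn
  by_cases hyz : H.Adj y z
  · refine .cut s(y, z) hyz fun w hw => absurd (IsIsolated.eq_of_reachable ?_ hw.2) hw.1.symm
    intro w hw
    rw [deleteEdges_adj] at hw
    exact hw.2 (hy w hw.1 ▸ rfl)
  · exact .isolated fun w hw => hyz (hy w hw ▸ hw)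

theorem of_injective {H' : SimpleGraph W} (f : V → W) (hf : f.Injective)
    (hadj : ∀ a b, H.Adj a b → H'.Adj (f a) (f b)) {p : V} (h : CapturedIn H' (f p) n) :
    CapturedIn H p n := by
  generalize hq : f p = q at h
  induction h generalizing H p with
  | isolated hiso => exact .isolated fun w hw => hiso _ (hq ▸ hadj _ _ hw)
  | @cut H' q n e he hbr ih =>
    by_cases hiso : H.IsIsolated p
    · exact .isolated hiso
    obtain ⟨g, hg, hadj'⟩ : ∃ g ∈ H.edgeSet,
        ∀ a b, (H.deleteEdges {g}).Adj a b → (H'.deleteEdges {e}).Adj (f a) (f b) := by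
      by_cases hpre : ∃ g ∈ H.edgeSet, Sym2.map f g = e
      · obtain ⟨g, hg, rfl⟩ := hpre
        refine ⟨g, hg, fun a b hab => ?_⟩
        rw [deleteEdges_adj, Set.mem_singleton_iff] at hab ⊢
        exact ⟨hadj _ _ hab.1, fun h => hab.2 (Sym2.map.injective hf (by simpa using h))⟩
      · obtain ⟨w, hw⟩ := exists_adj_iff_not_isIsolated.2 hiso
        refine ⟨s(p, w), hw, fun a b hab => ?_⟩
        rw [deleteEdges_adj, Set.mem_singleton_iff] at hab ⊢
        exact ⟨hadj _ _ hab.1, fun h => hpre ⟨s(a, b), hab.1, by simpa using h⟩⟩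
    refine .cut g hg fun w hw => ih (f w) ⟨fun h => hw.1 (hf (hq.trans h)), ?_⟩ hadj' rfl
    simpa [hq] using hw.2.map ⟨f, fun {a b} => hadj' a b⟩

theorem of_deleteEdges_pendant (huv : M.Adj u v) (hv : ∀ y, M.Adj v y → y = u) {w₀ : V}
    (huw : M.Adj u w₀) (hw₀ : w₀ ≠ v) {q : V} (hq : q ≠ v)
    (h : CapturedIn (M.deleteEdges {s(u, v)}) q n) :
    CapturedIn (M.deleteEdges {s(u, w₀)}) q n := by
  classical
  induction n generalizing M q with
  | zero =>
    cases h with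
    | isolated hiso => exact .isolated (IsIsolated.deleteEdges_swap huw hw₀ hq hiso)
  | succ m ih =>
    cases h with
    | isolated hiso => exact .isolated (IsIsolated.deleteEdges_swap huw hw₀ hq hiso)
    | cut e he hbr =>
    rw [deleteEdges_deleteEdges] at hbr
    by_cases hew : e = s(u, w₀)
    · subst hew
      refine .cut s(u, v) (by simp [huv, hw₀.symm, huw.ne]) ?_
      rwa [deleteEdges_deleteEdges, Set.union_comm]
    obtain ⟨heM, hev⟩ := (edgeSet_deleteEdges _ ▸ he : e ∈ M.edgeSet \ {s(u, v)})
    refine .cut e (by rw [edgeSet_deleteEdges]; exact ⟨heM, hew⟩) fun w hw => ?_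
    rw [deleteEdges_deleteEdges, Set.union_comm, ← deleteEdges_deleteEdges] at hw ⊢
    rw [Set.union_comm, ← deleteEdges_deleteEdges] at hbr
    have huv' : (M.deleteEdges {e}).Adj u v := by simpa [huv, eq_comm] using hev
    have huw' : (M.deleteEdges {e}).Adj u w₀ := by simp [huw, Ne.symm hew]
    have hv' : ∀ y, (M.deleteEdges {e}).Adj v y → y = u := fun y hy => hv y (deleteEdges_le _ hy)
    have hswap := hw.2.deleteEdges_swap hv' huw' hw₀
    rcases eq_or_ne w v with rfl | hwv
    · have hw₀u : ((M.deleteEdges {e}).deleteEdges {s(u, w)}).Adj w₀ u :=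
        (deleteEdges_adj ..).2 ⟨huw'.symm, by simp [hw₀, huw'.ne.symm]⟩
      refine of_forall_adj_eq (pos_of_forall_catMove hbr (by simpa [hq] using hswap) hw₀u)
        fun y hy => hv' y (deleteEdges_le _ hy)
    · exact ih huv' hv' huw' hwv (hbr w ⟨hw.1, by simpa [hq, hwv] using hswap⟩)

theorem addLeaf_of_cut {p : V} {e : Sym2 V} (he : e ∈ M.edgeSet)
    (hpos : (M.deleteEdges {e}).Reachable p u → 0 < m)
    (h : ∀ w, CatMove (M.deleteEdges {e}) p w →
      CapturedIn (addLeaf (M.deleteEdges {e}) u) (some w) m) :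
    CapturedIn (addLeaf M u) (some p) (m + 1) := by
  refine .cut (Sym2.map some e) (map_some_mem_edgeSet_addLeaf.2 he) ?_
  rw [addLeaf_deleteEdges]
  rintro (_ | w) hw
  · refine of_forall_adj_eq (hpos (by simpa using addLeaf_reachable_some hw.2)) (z := some u) ?_
    rintro (_ | w) hadj <;> simp_all
  · exact h w hw.of_addLeaf

theorem addLeaf_of_not_reachable {p : V} (h : CapturedIn M p n) (hr : ¬ M.Reachable p u) :
    CapturedIn (addLeaf M u) (some p) n := by
  induction h with
  | isolated hiso => exact .isolated (isIsolated_addLeaf_some hiso fun hpu => hr (hpu ▸ .rfl))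
  | cut e he hbr ih =>
    exact addLeaf_of_cut he (fun hr' => absurd (hr'.mono (deleteEdges_le _)) hr)
      fun w hw => ih w hw fun hwu => hr ((hw.2.trans hwu).mono (deleteEdges_le _))

theorem addLeaf_pendant (hv : ∀ y, M.Adj v y → y = u) (hvu : v ≠ u) (hn : 0 < n) :
    CapturedIn (addLeaf M u) (some v) n := by
  refine of_forall_adj_eq hn (z := some u) ?_
  rintro (_ | w) hadj
  · exact absurd (addLeaf_adj_some_none.1 hadj) hvu
  · rw [hv w (addLeaf_adj_some_some.1 hadj)]

theorem addLeaf_of_cut_of_pendant {p : V} {e : Sym2 V} (he : e ∈ M.edgeSet)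
    (huv : (M.deleteEdges {e}).Adj u v) (hv : ∀ y, M.Adj v y → y = u) (hm : 0 < m)
    (h : ∀ w, w ≠ v → CatMove (M.deleteEdges {e}) p w →
      CapturedIn (addLeaf (M.deleteEdges {e}) u) (some w) m) :
    CapturedIn (addLeaf M u) (some p) (m + 1) := by
  refine addLeaf_of_cut he (fun _ => hm) fun w hw => ?_
  rcases eq_or_ne w v with rfl | hwv
  · exact addLeaf_pendant (fun y hy => hv y (deleteEdges_le _ hy)) huv.ne' hm
  · exact h w hwv hw

theorem addLeaf (huv : M.Adj u v) (hv : ∀ y, M.Adj v y → y = u) {p : V}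
    (hguard : p = u → ∃ w, w ≠ v ∧ M.Adj u w) (h : CapturedIn M p n) :
    CapturedIn (addLeaf M u) (some p) n := by
  induction n generalizing M p with
  | zero =>
    cases h with
    | isolated hiso => exact .isolated (isIsolated_addLeaf_some hiso fun hpu => hiso v (hpu ▸ huv))
  | succ m ih =>
    rcases eq_or_ne p v with rfl | hpv
    · exact addLeaf_pendant hv huv.ne' (h.pos huv.symm)
    cases h with
    | isolated hiso => exact .isolated (isIsolated_addLeaf_some hiso fun hpu => hiso v (hpu ▸ huv))
    | cut e he hbr =>
    have hv' (e : Sym2 V) : ∀ y, (M.deleteEdges {e}).Adj v y → y = u :=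
      fun y hy => hv y (deleteEdges_le _ hy)
    have ih' {e : Sym2 V} (huv' : (M.deleteEdges {e}).Adj u v) {w : V}
        (hw : CatMove (M.deleteEdges {e}) p w) (hcap : CapturedIn (M.deleteEdges {e}) w m) :
        CapturedIn (addLeaf (M.deleteEdges {e}) u) (some w) m :=
      ih huv' (hv' e) (fun hwu => (hwu ▸ hw).exists_adj_ne huv' (hv' e) hpv) hcap
    by_cases hr : (M.deleteEdges {e}).Reachable p u
    swap
    · exact addLeaf_of_cut he (absurd · hr) fun w hw =>
        (hbr w hw).addLeaf_of_not_reachable fun hwu => hr (hw.2.trans hwu)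
    by_cases he' : e = s(u, v)
    swap
    · have huv' : (M.deleteEdges {e}).Adj u v := by simp [huv, Ne.symm he']
      exact addLeaf_of_cut_of_pendant he huv' hv (pos_of_forall_catMove hbr hr huv')
        fun w _ hw => ih' huv' hw (hbr w hw)
    subst he'
    -- The herder cuts a guard edge `uw₀` instead of the pendant edge `uv`.
    obtain ⟨w₀, hw₀v, huw₀⟩ : ∃ w₀, w₀ ≠ v ∧ M.Adj u w₀ := by
      rcases eq_or_ne p u with hpu | hpu
      · exact hguard hpu
      · exact CatMove.exists_adj_ne huv hv hpv ⟨hpu, hr.mono (deleteEdges_le _)⟩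
    have huw₀' : (M.deleteEdges {s(u, v)}).Adj u w₀ := by simp [huw₀, hw₀v, huv.ne]
    have huv' : (M.deleteEdges {s(u, w₀)}).Adj u v := by simp [huv, hw₀v.symm, huw₀.ne]
    refine addLeaf_of_cut_of_pendant huw₀ huv' hv (pos_of_forall_catMove hbr hr huw₀')
      fun w hwv hw => ih' huv' hw ?_
    have hreach : (M.deleteEdges {s(u, v)}).Reachable p w :=
      (hw.2.deleteEdges_pendant (hv' _) hpv hwv).mono (deleteEdges_mono (deleteEdges_le _))
    exact (hbr w ⟨hw.1, hreach⟩).of_deleteEdges_pendant huv hv huw₀ hw₀v hwv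

end CapturedIn

section catVNum

variable {V : Type*} {H : SimpleGraph V} {y z : V}

theorem one_le_catVNum (h : H.Adj y z) : 1 ≤ catVNum H y :=
  le_sInf <| by
    rintro _ ⟨m, hm, rfl⟩
    exact_mod_cast hm.pos h

theorem catVNum_eq_one (hyz : H.Adj y z) (hy : ∀ w, H.Adj y w → w = z) : catVNum H y = 1 :=
  le_antisymm (sInf_le ⟨1, .of_forall_adj_eq one_pos hy, Nat.cast_one⟩) (one_le_catVNum hyz)

end catVNum

theorem capturedIn_addLeaf_iff {V : Type*} {G : SimpleGraph V} {u v : V} (huv : G.Adj u v)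
    (hv : ∀ y, G.Adj v y → y = u) (hu : ∃ w, w ≠ v ∧ G.Adj u w) (a : V) (n : ℕ) :
    CapturedIn (addLeaf G u) (some a) n ↔ CapturedIn G a n :=
  ⟨.of_injective some (Option.some_injective V) fun _ _ => addLeaf_adj_some_some.2,
    .addLeaf huv hv fun _ => hu⟩

theorem addLeaf_catNum_general {V : Type u} (G : SimpleGraph V)
    (u v : V) (hdu : DegGe G u 2) (huv : G.Adj u v) (hdv : DegOne G v) :
    (∀ a : V, catVNum (addLeaf G u) (some a) = catVNum G a) ∧
    catVNum (addLeaf G u) none = 1 ∧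
    catNum (addLeaf G u) = catNum G := by
  have hv : ∀ y, G.Adj v y → y = u := fun y hy => hdv.eq_of_adj hy huv.symm
  have hsome (a : V) : catVNum (addLeaf G u) (some a) = catVNum G a := by
    simp only [catVNum, capturedIn_addLeaf_iff huv hv (hdu.exists_adj_ne one_lt_two v)]
  have hnone : catVNum (addLeaf G u) none = 1 :=
    catVNum_eq_one (z := some u) (by simp) (by rintro (_ | w) h <;> simp_all)
  refine ⟨hsome, hnone, ?_⟩
  rw [catNum, catNum, iSup_option, hnone]
  simp only [hsome]
  exact sup_eq_right.2 ((one_le_catVNum huv).trans (le_iSup _ u))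

/-- duplicating a leaf does not change cat numbers. -/
theorem addLeaf_catNum {V : Type u} (G : SimpleGraph V) (hc : G.Connected)
    (u v : V) (hdu : DegGe G u 2) (huv : G.Adj u v) (hdv : DegOne G v) :
    (∀ a : V, catVNum (addLeaf G u) (some a) = catVNum G a) ∧
    catVNum (addLeaf G u) none = 1 ∧
    catNum (addLeaf G u) = catNum G :=
  addLeaf_catNum_general G u v hdu huv hdv
end
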